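/- arXiv:2107.05414 — 2 statements merged into one kernel-verified Lean document; each statement's English description precedes it below -/
import Mathlib

section
/- In the ESC model with ν = NegBin(r, p) + 1 (a negative binomial on {0,1,2,…} shifted by 1), the conditional distribution of the number of clusters K given r and p is π(K | r, p) = (1/P(E_n | r, p))·(1−p)^{rK} p^{n−K}/((n−K)·B(rK, n−K)) for 1 ≤ K < n, and π(n | r, p) = (1/P(E_n | r, p))·(1−p)^{rn}. -/
open Finset

/-- Negative binomial pmf with real shape `r`: `P(N = k) = Γ(r+k)/(Γ(r)k!)·(1−p)^r·p^k`. -/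
noncomputable def negBinPMF (r p : ℝ) (k : ℕ) : ℝ :=
  Real.Gamma (r + k) / (Real.Gamma r * k.factorial) * (1 - p) ^ r * p ^ k

/-- The shifted negative binomial `NegBin(r, p) + 1`, a distribution on `{1, 2, …}`. -/
noncomputable def shiftedNegBin (r p : ℝ) (k : ℕ) : ℝ :=
  if k = 0 then 0 else negBinPMF r p (k - 1)

/-- Probability that `K` i.i.d. draws from `ν` form a composition of `n` of length `K`. -/
noncomputable def compositionProb (ν : ℕ → ℝ) (K n : ℕ) : ℝ :=
  ∑ m ∈ (Finset.Nat.antidiagonalTuple K n).filter (fun m => ∀ i, 1 ≤ m i), ∏ i, ν (m i)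

/-- `P(E_n | ν)`: the probability that some initial sum of i.i.d. draws from `ν` equals `n`. -/
noncomputable def hitProb (ν : ℕ → ℝ) (n : ℕ) : ℝ :=
  ∑' K : ℕ, compositionProb ν K n

/-- The real Beta function `B(a, b) = Γ(a)Γ(b)/Γ(a + b)`. -/
noncomputable def realBeta (a b : ℝ) : ℝ :=
  Real.Gamma a * Real.Gamma b / Real.Gamma (a + b)
/-!
Writing `negBinPMF r p k = multichoose r k · (1 - p)^r · p^k`, a composition of `n` into `K`
positive parts, shifted down to a `K`-tuple summing to `n - K`, has probability
`(1 - p)^{rK} p^{n-K} ∏ multichoose r (mᵢ)`. Summing over the tuples, the Chu–Vandermonde identity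
for `multichoose` (i.e. `(1 - x)^{-a} (1 - x)^{-b} = (1 - x)^{-(a+b)}`) collapses the sum to
`multichoose (rK) (n - K)`, which for `n > K` is `1 / ((n - K) B(rK, n - K))`.
-/

-- `multichoose a k = (-1)^k choose (-a) k` reduces this to `Ring.add_choose_eq`.
theorem Ring.multichoose_add {R : Type*} [CommRing R] [BinomialRing R] (a b : R) (k : ℕ) :
    multichoose (a + b) k = ∑ ij ∈ antidiagonal k, multichoose a ij.1 * multichoose b ij.2 := by
  have h := add_choose_eq k (Commute.all (-a) (-b))
  rw [← neg_add, choose_neg'] at h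
  simp only [choose_neg', smul_mul_smul_comm, ← Int.negOnePow_add] at h
  rwa [sum_congr rfl fun ij hij => by rw [← Nat.cast_add, mem_antidiagonal.1 hij], ← smul_sum,
    smul_left_cancel_iff] at h

theorem Finset.Nat.sum_antidiagonalTuple_succ {M : Type*} [AddCommMonoid M] (k n : ℕ)
    (f : (Fin (k + 1) → ℕ) → M) :
    ∑ m ∈ antidiagonalTuple (k + 1) n, f m =
      ∑ ij ∈ antidiagonal n, ∑ m ∈ antidiagonalTuple k ij.2, f (Fin.cons ij.1 m) := by
  rw [sum_sigma']
  refine sum_nbij' (fun m => ⟨(m 0, ∑ i, Fin.tail m i), Fin.tail m⟩)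
    (fun x => Fin.cons x.1.1 x.2) ?_ ?_ ?_ ?_ ?_
  · intro m hm
    simp_all [mem_antidiagonalTuple, Fin.sum_univ_succ, Fin.tail]
  · rintro ⟨⟨i, j⟩, m⟩ hx
    simp_all [mem_antidiagonalTuple, Fin.sum_univ_succ]
  · intro m _
    simp
  · rintro ⟨⟨i, j⟩, m⟩ hx
    simp_all [mem_antidiagonalTuple]
  · intro m _
    simp

theorem Ring.sum_antidiagonalTuple_prod_multichoose {R : Type*} [CommRing R] [BinomialRing R]
    (a : R) (k n : ℕ) :
    ∑ m ∈ Finset.Nat.antidiagonalTuple k n, ∏ i, multichoose a (m i) = multichoose (k * a) n := by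
  induction k generalizing n with
  | zero =>
    cases n <;> simp [multichoose_zero_succ]
  | succ k ih =>
    simp only [Finset.Nat.sum_antidiagonalTuple_succ, Fin.prod_univ_succ, Fin.cons_zero,
      Fin.cons_succ, ← mul_sum, ih, Nat.cast_succ, add_one_mul, add_comm _ a, multichoose_add]

theorem Real.Gamma_add_nat {s : ℝ} (hs : ∀ m : ℕ, s ≠ -m) (n : ℕ) :
    Gamma (s + n) = (ascPochhammer ℝ n).eval s * Gamma s := by
  induction n with
  | zero => simp
  | succ n ih =>
    have hsn : s + n ≠ 0 := fun h => hs n (eq_neg_of_add_eq_zero_left h)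
    rw [Nat.cast_succ, ← add_assoc, Gamma_add_one hsn, ih, ascPochhammer_succ_right]
    simp only [Polynomial.eval_mul, Polynomial.eval_add, Polynomial.eval_X,
      Polynomial.eval_natCast]
    ring

theorem Real.multichoose_eq_Gamma_div {s : ℝ} (hs : ∀ m : ℕ, s ≠ -m) (n : ℕ) :
    Ring.multichoose s n = Gamma (s + n) / (Gamma s * n.factorial) := by
  have hfac : (n.factorial : ℝ) * Ring.multichoose s n = (ascPochhammer ℝ n).eval s := by
    rw [← nsmul_eq_mul, Ring.factorial_nsmul_multichoose_eq_ascPochhammer,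
      Polynomial.ascPochhammer_smeval_eq_eval]
  rw [Gamma_add_nat hs, ← hfac, eq_div_iff (mul_ne_zero (Gamma_ne_zero hs) (by positivity))]
  ring

theorem Real.multichoose_eq_one_div_mul_realBeta {s : ℝ} (hs : ∀ m : ℕ, s ≠ -m) {n : ℕ}
    (hn : n ≠ 0) : Ring.multichoose s n = 1 / (n * realBeta s n) := by
  obtain ⟨n, rfl⟩ := Nat.exists_eq_succ_of_ne_zero hn
  rw [multichoose_eq_Gamma_div hs, realBeta, Nat.cast_succ, Gamma_nat_eq_factorial,
    Nat.factorial_succ, Nat.cast_mul, Nat.cast_succ]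
  field_simp

theorem negBinPMF_eq_multichoose {r : ℝ} (hr : ∀ m : ℕ, r ≠ -m) (p : ℝ) (k : ℕ) :
    negBinPMF r p k = Ring.multichoose r k * (1 - p) ^ r * p ^ k := by
  rw [negBinPMF, Real.multichoose_eq_Gamma_div hr]

theorem compositionProb_eq_sum_antidiagonalTuple (ν : ℕ → ℝ) {K n : ℕ} (hKn : K ≤ n) :
    compositionProb ν K n =
      ∑ m ∈ Finset.Nat.antidiagonalTuple K (n - K), ∏ i, ν (m i + 1) := by
  refine sum_nbij' (fun m i => m i - 1) (fun m i => m i + 1) ?_ ?_ ?_ ?_ ?_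
  · intro m hm
    simp only [mem_filter, Finset.Nat.mem_antidiagonalTuple] at hm
    simp [Finset.Nat.mem_antidiagonalTuple, sum_tsub_distrib _ fun i _ => hm.2 i, hm.1]
  · intro m hm
    simp_all [Finset.Nat.mem_antidiagonalTuple, sum_add_distrib]
  · intro m hm
    rw [mem_filter] at hm
    funext i
    exact Nat.sub_add_cancel (hm.2 i)
  · intro m _
    simp
  · intro m hm
    rw [mem_filter] at hm
    refine prod_congr rfl fun i _ => ?_
    rw [Nat.sub_add_cancel (hm.2 i)]

theorem shiftedNegBin_succ (r p : ℝ) (k : ℕ) : shiftedNegBin r p (k + 1) = negBinPMF r p k := by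
  simp [shiftedNegBin]

theorem compositionProb_shiftedNegBin {r p : ℝ} (hr : ∀ m : ℕ, r ≠ -m) (hp : p ≤ 1) {K n : ℕ}
    (hKn : K ≤ n) :
    compositionProb (shiftedNegBin r p) K n =
      (1 - p) ^ (r * K) * p ^ (n - K) * Ring.multichoose (r * K) (n - K) := by
  have hprod : ∀ m ∈ Finset.Nat.antidiagonalTuple K (n - K),
      ∏ i, shiftedNegBin r p (m i + 1) =
        (1 - p) ^ (r * K) * p ^ (n - K) * ∏ i, Ring.multichoose r (m i) := by
    intro m hm
    rw [Finset.Nat.mem_antidiagonalTuple] at hm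
    simp only [shiftedNegBin_succ, negBinPMF_eq_multichoose hr, prod_mul_distrib, prod_const,
      card_univ, Fintype.card_fin, prod_pow_eq_pow_sum, hm,
      ← Real.rpow_mul_natCast (sub_nonneg.2 hp)]
    ring
  rw [compositionProb_eq_sum_antidiagonalTuple _ hKn, sum_congr rfl hprod, ← mul_sum,
    Ring.sum_antidiagonalTuple_prod_multichoose, mul_comm r]

theorem ne_neg_natCast_of_pos {s : ℝ} (hs : 0 < s) (m : ℕ) : s ≠ -m :=
  ((neg_nonpos.2 m.cast_nonneg).trans_lt hs).ne'

theorem ESC_NB_conditional_K_general (r p : ℝ) (hr : 0 < r) (hp₁ : p < 1) (n : ℕ) :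
    (∀ K : ℕ, 1 ≤ K → K < n →
        compositionProb (shiftedNegBin r p) K n / hitProb (shiftedNegBin r p) n
          = (1 / hitProb (shiftedNegBin r p) n) *
              ((1 - p) ^ (r * K) * p ^ (n - K) / ((n - K) * realBeta (r * K) (n - K)))) ∧
      compositionProb (shiftedNegBin r p) n n / hitProb (shiftedNegBin r p) n
        = (1 / hitProb (shiftedNegBin r p) n) * (1 - p) ^ (r * n) := by
  have hr' := ne_neg_natCast_of_pos hr
  refine ⟨fun K hK hKn => ?_, ?_⟩
  · have hrK := ne_neg_natCast_of_pos (mul_pos hr (Nat.cast_pos.2 hK))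
    rw [compositionProb_shiftedNegBin hr' hp₁.le hKn.le,
      Real.multichoose_eq_one_div_mul_realBeta hrK (Nat.sub_ne_zero_of_lt hKn),
      Nat.cast_sub hKn.le]
    ring
  · rw [compositionProb_shiftedNegBin hr' hp₁.le le_rfl, Nat.sub_self, pow_zero,
      Ring.multichoose_zero_right]
    ring

/-- In the ESC model with `ν = NegBin(r, p) + 1`, the conditional distribution of the number
of clusters `K` given `r, p` is
`π(K | r, p) = (1/P(E_n|r,p))·(1−p)^{rK} p^{n−K}/((n−K)·B(rK, n−K))` for `1 ≤ K < n`, and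
`π(n | r, p) = (1/P(E_n|r,p))·(1−p)^{rn}`. -/
theorem ESC_NB_conditional_K (r p : ℝ) (hr : 0 < r) (hp₀ : 0 < p) (hp₁ : p < 1) (n : ℕ)
    (hn : 1 ≤ n) :
    (∀ K : ℕ, 1 ≤ K → K < n →
        compositionProb (shiftedNegBin r p) K n / hitProb (shiftedNegBin r p) n
          = (1 / hitProb (shiftedNegBin r p) n) *
              ((1 - p) ^ (r * K) * p ^ (n - K) / ((n - K) * realBeta (r * K) (n - K)))) ∧
      compositionProb (shiftedNegBin r p) n n / hitProb (shiftedNegBin r p) n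
        = (1 / hitProb (shiftedNegBin r p) n) * (1 - p) ^ (r * n) :=
  ESC_NB_conditional_K_general r p hr hp₁ n
end

section
/- In the ESC model with ν = NegBin(r, p) + 1, r ~ Gamma(η, σ), and p ~ Beta(1, 1) (uniform), the unnormalized marginal distribution of the number of clusters K is π(K) ∝ ω'_K^{−η}·Ψ(η, η, σ/ω'_K) − 1_{{K < n}}·ω_K^{−η}·Ψ(η, η, σ/ω_K), where ω_K = K/(n−K) and ω'_K = K/(n−K+1). -/
open MeasureTheory ProbabilityTheory

/-- The confluent hypergeometric function of the second kind (Tricomi function). -/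
noncomputable def tricomiU (a b z : ℝ) : ℝ :=
  (1 / Real.Gamma a) *
    ∫ t in Set.Ioi (0 : ℝ), Real.exp (-(z * t)) * t ^ (a - 1) * (1 + t) ^ (b - a - 1)

lemma beta_real (m : ℕ) {s : ℝ} (hs : 0 < s) :
    ∫ p in Set.Ioo (0:ℝ) 1, p ^ m * (1 - p) ^ s
      = m.factorial * Real.Gamma (s + 1) / Real.Gamma (s + m + 2) := by
  have hre1 : (0:ℝ) < Complex.re ((m:ℂ) + 1) := by simp; positivity
  have hre2 : (0:ℝ) < Complex.re ((s:ℂ) + 1) := by simp; positivity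
  have key := Complex.Gamma_mul_Gamma_eq_betaIntegral hre1 hre2
  have hbeta : Complex.betaIntegral ((m:ℂ)+1) ((s:ℂ)+1)
      = ((∫ p in Set.Ioo (0:ℝ) 1, p ^ m * (1 - p) ^ s : ℝ) : ℂ) := by
    rw [Complex.betaIntegral, intervalIntegral.integral_of_le zero_le_one,
      MeasureTheory.integral_Ioc_eq_integral_Ioo]
    have : ∫ t in Set.Ioo (0:ℝ) 1, (t:ℂ) ^ ((m:ℂ) + 1 - 1) * (1 - (t:ℂ)) ^ ((s:ℂ) + 1 - 1)
        = ∫ t in Set.Ioo (0:ℝ) 1, ((t ^ m * (1 - t) ^ s : ℝ) : ℂ) := by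
      refine setIntegral_congr_fun measurableSet_Ioo fun p hp => ?_
      obtain ⟨hp0, hp1⟩ := hp
      have h1p : (0:ℝ) ≤ 1 - p := by linarith
      rw [add_sub_cancel_right, add_sub_cancel_right]
      rw [show ((1:ℂ) - (p:ℂ)) = (((1 - p : ℝ)):ℂ) by push_cast; ring]
      rw [← Complex.ofReal_cpow h1p, Complex.cpow_natCast]
      push_cast
      ring
    rw [this]; exact integral_ofReal
  have hG1 : Complex.Gamma ((m:ℂ) + 1) = (m.factorial : ℂ) := by
    exact_mod_cast Complex.Gamma_nat_eq_factorial m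
  have hG2 : Complex.Gamma ((s:ℂ) + 1) = (Real.Gamma (s+1) : ℂ) := by
    rw [show ((s:ℂ) + 1) = (((s+1:ℝ)):ℂ) by push_cast; ring, Complex.Gamma_ofReal]
  have hG3 : Complex.Gamma ((m:ℂ) + 1 + ((s:ℂ) + 1)) = (Real.Gamma (s+m+2) : ℂ) := by
    rw [show ((m:ℂ) + 1 + ((s:ℂ) + 1)) = (((s+m+2:ℝ)):ℂ) by push_cast; ring,
      Complex.Gamma_ofReal]
  rw [hbeta, hG1, hG2, hG3] at key
  have hGpos : 0 < Real.Gamma (s + m + 2) := Real.Gamma_pos_of_pos (by positivity)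
  have key2 : (m.factorial : ℝ) * Real.Gamma (s+1)
      = Real.Gamma (s+m+2) * ∫ p in Set.Ioo (0:ℝ) 1, p ^ m * (1 - p) ^ s := by
    exact_mod_cast key
  field_simp [hGpos.ne']
  linarith [key2]

lemma Jlem {η σ : ℝ} (hη : 0 < η) (hσ : 0 < σ) {Kr b : ℝ} (hK : 0 < Kr) (hb : 0 < b) :
    ∫ r in Set.Ioi (0:ℝ), b / (r * Kr + b) * gammaPDFReal η σ r
      = σ ^ η * ((b / Kr) ^ η * tricomiU η η (σ * b / Kr)) := by
  set c : ℝ := Kr / b with hc_def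
  have hc : 0 < c := div_pos hK hb
  have h1 : (∫ t in Set.Ioi (0:ℝ),
        Real.exp (-(σ * b / Kr * t)) * t ^ (η - 1) * (1 + t) ^ (η - η - 1))
      = c * ∫ r in Set.Ioi (0:ℝ),
        Real.exp (-(σ * b / Kr * (c * r))) * (c * r) ^ (η - 1) * (1 + c * r) ^ (η - η - 1) := by
    rw [integral_comp_mul_left_Ioi
      (fun t => Real.exp (-(σ * b / Kr * t)) * t ^ (η - 1) * (1 + t) ^ (η - η - 1)) 0 hc,
      mul_zero, smul_eq_mul, ← mul_assoc, mul_inv_cancel₀ hc.ne', one_mul]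
  rw [tricomiU, h1]
  rw [show σ ^ η * ((b / Kr) ^ η * (1 / Real.Gamma η * (c * ∫ r in Set.Ioi (0:ℝ),
        Real.exp (-(σ * b / Kr * (c * r))) * (c * r) ^ (η - 1) * (1 + c * r) ^ (η - η - 1))))
      = ∫ r in Set.Ioi (0:ℝ), (σ ^ η * (b / Kr) ^ η * (1 / Real.Gamma η) * c) *
        (Real.exp (-(σ * b / Kr * (c * r))) * (c * r) ^ (η - 1) * (1 + c * r) ^ (η - η - 1))
      from by rw [integral_const_mul]; ring]
  refine setIntegral_congr_fun measurableSet_Ioi fun r hr => ?_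
  have hr0 : (0:ℝ) < r := hr
  have e1 : σ * b / Kr * (c * r) = σ * r := by rw [hc_def]; field_simp
  have e2 : (c * r) ^ (η - 1) = c ^ (η - 1) * r ^ (η - 1) := Real.mul_rpow hc.le hr0.le
  have e3 : (1 + c * r) ^ (η - η - 1) = b / (b + Kr * r) := by
    rw [show η - η - 1 = (-1 : ℝ) by ring, Real.rpow_neg_one,
      show 1 + c * r = (b + Kr * r) / b by rw [hc_def]; field_simp, inv_div]
  have e4 : (b / Kr) ^ η * c ^ η = 1 := by
    rw [← Real.mul_rpow (by positivity) hc.le,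
      show b / Kr * c = 1 by rw [hc_def]; field_simp, Real.one_rpow]
  have e5 : c * c ^ (η - 1) = c ^ η := by
    calc c * c ^ (η - 1) = c ^ (1:ℝ) * c ^ (η - 1) := by rw [Real.rpow_one]
    _ = c ^ (1 + (η - 1)) := (Real.rpow_add hc _ _).symm
    _ = c ^ η := by ring_nf
  rw [e1, e2, e3, gammaPDFReal, if_pos hr0.le, show r * Kr + b = b + Kr * r by ring]
  rw [show σ ^ η * (b / Kr) ^ η * (1 / Real.Gamma η) * c *
        (Real.exp (-(σ * r)) * (c ^ (η - 1) * r ^ (η - 1)) * (b / (b + Kr * r)))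
      = ((b / Kr) ^ η * c ^ η) * (σ ^ η * (1 / Real.Gamma η) *
        (Real.exp (-(σ * r)) * r ^ (η - 1) * (b / (b + Kr * r)))) from by rw [← e5]; ring]
  rw [e4, one_mul]
  ring

lemma inner_eval (n K : ℕ) (hK : 1 ≤ K) (hKn : K ≤ n) {r : ℝ} (hr : 0 < r) :
    (∫ p in Set.Ioo (0 : ℝ) 1,
        Real.Gamma (r * K + n - K) / (Real.Gamma (r * K) * (n - K).factorial) *
          (1 - p) ^ (r * K) * p ^ (n - K))
      = (((n - K : ℕ) : ℝ) + 1) / (r * K + (((n - K : ℕ) : ℝ) + 1))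
        - ((n - K : ℕ) : ℝ) / (r * K + ((n - K : ℕ) : ℝ)) := by
  have hKpos : (0:ℝ) < K := by exact_mod_cast hK
  have hx : (0:ℝ) < r * K := mul_pos hr hKpos
  have hmcast : ((n - K : ℕ) : ℝ) = (n:ℝ) - K := by
    exact Nat.cast_sub hKn
  set x : ℝ := r * K with hx_def
  set m : ℕ := n - K with hm_def
  have h1 : x + (n:ℝ) - K = x + (m:ℝ) := by rw [hmcast]; ring
  calc (∫ p in Set.Ioo (0 : ℝ) 1,
        Real.Gamma (x + n - K) / (Real.Gamma x * m.factorial) * (1 - p) ^ x * p ^ m)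
      = ∫ p in Set.Ioo (0 : ℝ) 1,
        (Real.Gamma (x + (m:ℝ)) / (Real.Gamma x * m.factorial)) * (p ^ m * (1 - p) ^ x) := by
        rw [show x + (n:ℝ) - K = x + (m:ℝ) from h1]; congr 1; funext p; ring
    _ = (Real.Gamma (x + (m:ℝ)) / (Real.Gamma x * m.factorial)) *
        ∫ p in Set.Ioo (0 : ℝ) 1, p ^ m * (1 - p) ^ x := integral_const_mul _ _
    _ = (Real.Gamma (x + (m:ℝ)) / (Real.Gamma x * m.factorial)) *
        (m.factorial * Real.Gamma (x + 1) / Real.Gamma (x + m + 2)) := by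
        rw [beta_real m hx]
    _ = ((m:ℝ) + 1) / (x + ((m:ℝ) + 1)) - (m:ℝ) / (x + (m:ℝ)) := by
        have hxm : (0:ℝ) < x + m := by positivity
        have g1 : Real.Gamma (x + 1) = x * Real.Gamma x := Real.Gamma_add_one hx.ne'
        have g2 : Real.Gamma (x + (m:ℝ) + 2)
            = (x + m + 1) * ((x + m) * Real.Gamma (x + m)) := by
          rw [show x + (m:ℝ) + 2 = (x + (m:ℝ) + 1) + 1 by ring,
            Real.Gamma_add_one (by positivity),
            show x + (m:ℝ) + 1 = (x + (m:ℝ)) + 1 by ring, Real.Gamma_add_one hxm.ne']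
        rw [g1, g2]
        have hΓx : Real.Gamma x ≠ 0 := (Real.Gamma_pos_of_pos hx).ne'
        have hΓxm : Real.Gamma (x + (m:ℝ)) ≠ 0 := (Real.Gamma_pos_of_pos hxm).ne'
        have hfac : (m.factorial : ℝ) ≠ 0 := by exact_mod_cast m.factorial_ne_zero
        have h1' : x + (m:ℝ) + 1 ≠ 0 := by positivity
        have h2' : x + ((m:ℝ) + 1) ≠ 0 := by positivity
        field_simp
        ring

lemma integrable_weight {η σ : ℝ} (hη : 0 < η) (hσ : 0 < σ) {Kr : ℝ} (hK : 0 < Kr)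
    {b : ℝ} (hb : 0 ≤ b) :
    IntegrableOn (fun r => b / (r * Kr + b) * gammaPDFReal η σ r) (Set.Ioi (0:ℝ)) := by
  have hint : Integrable (gammaPDFReal η σ) := by
    refine ⟨(measurable_gammaPDFReal η σ).aestronglyMeasurable, ?_⟩
    rw [hasFiniteIntegral_iff_ofReal (ae_of_all _ (gammaPDFReal_nonneg hη hσ))]
    have : ∫⁻ x, ENNReal.ofReal (gammaPDFReal η σ x) = 1 := lintegral_gammaPDF_eq_one hη hσ
    rw [this]
    exact ENNReal.one_lt_top
  refine Integrable.mono' hint.restrict ?_ ?_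
  · exact ((measurable_const.div ((measurable_id.mul_const Kr).add_const b)).mul
      (measurable_gammaPDFReal η σ)).aestronglyMeasurable
  · rw [ae_restrict_iff' measurableSet_Ioi]
    refine ae_of_all _ fun r hr => ?_
    have hr0 : (0:ℝ) < r := hr
    have hden : (0:ℝ) < r * Kr + b := by nlinarith
    have hq0 : 0 ≤ b / (r * Kr + b) := div_nonneg hb hden.le
    have hq1 : b / (r * Kr + b) ≤ 1 := (div_le_one hden).mpr (by nlinarith)
    rw [Real.norm_eq_abs, abs_mul, abs_of_nonneg hq0,
      abs_of_nonneg (gammaPDFReal_nonneg hη hσ r)]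
    calc b / (r * Kr + b) * gammaPDFReal η σ r ≤ 1 * gammaPDFReal η σ r :=
        mul_le_mul_of_nonneg_right hq1 (gammaPDFReal_nonneg hη hσ r)
    _ = gammaPDFReal η σ r := one_mul _

/-- In the ESC model with `ν = NegBin(r, p) + 1`, `r ~ Gamma(η, σ)` and `p ~ Beta(1,1)`
(uniform), the unnormalized marginal distribution of the number of clusters `K` (obtained by
integrating the joint probability `P(K clusters and E_n | r, p) =
Γ(rK + n − K)/(Γ(rK)(n−K)!)·(1−p)^{rK} p^{n−K}` against the priors) satisfies
`π(K) ∝ ω'_K^{−η}·Ψ(η, η, σ/ω'_K) − 1_{K<n}·ω_K^{−η}·Ψ(η, η, σ/ω_K)` with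
`ω_K = K/(n−K)` and `ω'_K = K/(n−K+1)`. -/
theorem ESC_NB_marginal_K_uniform_prior (n : ℕ) (hn : 1 ≤ n) (η σ : ℝ) (hη : 0 < η)
    (hσ : 0 < σ) :
    ∃ c : ℝ, 0 < c ∧ ∀ K : ℕ, 1 ≤ K → K ≤ n →
      (∫ r in Set.Ioi (0 : ℝ),
          (∫ p in Set.Ioo (0 : ℝ) 1,
            Real.Gamma (r * K + n - K) / (Real.Gamma (r * K) * (n - K).factorial) *
              (1 - p) ^ (r * K) * p ^ (n - K)) * gammaPDFReal η σ r)
        = c * ((K / ((n : ℝ) - K + 1)) ^ (-η) * tricomiU η η (σ * ((n : ℝ) - K + 1) / K) -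
            (if K < n then (K / ((n : ℝ) - K)) ^ (-η) * tricomiU η η (σ * ((n : ℝ) - K) / K)
              else 0)) := by
  refine ⟨σ ^ η, Real.rpow_pos_of_pos hσ η, fun K hK1 hKn => ?_⟩
  have hKpos : (0:ℝ) < K := by exact_mod_cast hK1
  have hmcast : ((n - K : ℕ) : ℝ) = (n:ℝ) - K := by exact Nat.cast_sub hKn
  have hflip : ∀ b : ℝ, 0 < b → (b / (K:ℝ)) ^ η = ((K:ℝ) / b) ^ (-η) := by
    intro b hb
    rw [Real.rpow_neg (by positivity), ← Real.inv_rpow (by positivity), inv_div]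
  have hA : (∫ r in Set.Ioi (0 : ℝ),
        (∫ p in Set.Ioo (0 : ℝ) 1,
          Real.Gamma (r * K + n - K) / (Real.Gamma (r * K) * (n - K).factorial) *
            (1 - p) ^ (r * K) * p ^ (n - K)) * gammaPDFReal η σ r)
      = ∫ r in Set.Ioi (0 : ℝ),
        ((((n - K : ℕ) : ℝ) + 1) / (r * K + (((n - K : ℕ) : ℝ) + 1)) * gammaPDFReal η σ r
          - ((n - K : ℕ) : ℝ) / (r * K + ((n - K : ℕ) : ℝ)) * gammaPDFReal η σ r) := by
    refine setIntegral_congr_fun measurableSet_Ioi fun r hr => ?_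
    rw [inner_eval n K hK1 hKn hr]
    ring
  rw [hA, integral_sub (integrable_weight hη hσ hKpos (by positivity))
    (integrable_weight hη hσ hKpos (Nat.cast_nonneg _))]
  rw [Jlem hη hσ hKpos (show (0:ℝ) < ((n - K : ℕ) : ℝ) + 1 by positivity)]
  by_cases hlt : K < n
  · have hm1 : (0:ℝ) < ((n - K : ℕ) : ℝ) := by
      have : 1 ≤ n - K := by omega
      exact_mod_cast this
    rw [Jlem hη hσ hKpos hm1, if_pos hlt, ← hmcast,
      hflip _ (by positivity : (0:ℝ) < ((n - K : ℕ) : ℝ) + 1), hflip _ hm1]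
    ring
  · have hm0 : (n - K : ℕ) = 0 := by omega
    rw [if_neg hlt, ← hmcast, hflip _ (by positivity : (0:ℝ) < ((n - K : ℕ) : ℝ) + 1)]
    simp only [hm0, Nat.cast_zero, zero_div, zero_mul, integral_zero]
    ring
end
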